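/- For every finite CGS (or ATS), every coalition A, and all ATL state formulas φ and ψ, the set ⟦⟨A⟩(φ U ψ)⟧ of locations satisfying ⟨A⟩(φ U ψ) is the least fixpoint of the monotone map Z ↦ ⟦ψ⟧ ∪ (⟦φ⟧ ∩ CPre(A, Z)) on subsets of Loc. -/

import Mathlib

/-!  Core formalization of concurrent game structures (CGS), alternating
transition systems (ATS), and the logic ATL, following Alur-Henzinger-Kupferman
and Laroussinie-Markey-Oreiby, "On the Expressiveness and Complexity of ATL".

A generic "game structure" `GS Agt Loc P M` has locations labelled by atomic
propositions from `P`, and in each location each agent has a set of available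
moves (of type `M`); a joint move (one move per agent) leads to a set of
possible successor locations (a singleton for CGSs, the intersection of the
chosen sets for ATSs). -/

structure GS (Agt Loc P M : Type) where
  lab : Loc → Set P
  mov : Loc → Agt → Set M
  step : Loc → (Agt → M) → Set Loc

namespace GS

variable {Agt Loc P M : Type}

/-- a complete joint move, valid at `ℓ`. -/
def ValidMove (S : GS Agt Loc P M) (ℓ : Loc) (m : Agt → M) : Prop :=
  ∀ a, m a ∈ S.mov ℓ a

/-- `Next ℓ A mA`: locations reachable from `ℓ` when each member `a` of the
coalition `A` plays `mA a` (and the other agents play arbitrary valid moves). -/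
def Next (S : GS Agt Loc P M) (ℓ : Loc) (A : Set Agt) (mA : Agt → M) : Set Loc :=
  {ℓ' | ∃ m, S.ValidMove ℓ m ∧ (∀ a ∈ A, m a = mA a) ∧ ℓ' ∈ S.step ℓ m}

/-- all possible successors of `ℓ`. -/
def NextAll (S : GS Agt Loc P M) (ℓ : Loc) : Set Loc :=
  {ℓ' | ∃ m, S.ValidMove ℓ m ∧ ℓ' ∈ S.step ℓ m}

/-- the controllable predecessors: `ℓ ∈ CPre A T` iff coalition `A` has a move
forcing the next location to be in `T`. -/
def CPre (S : GS Agt Loc P M) (A : Set Agt) (T : Set Loc) : Set Loc :=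
  {ℓ | ∃ mA : Agt → M, (∀ a ∈ A, mA a ∈ S.mov ℓ a) ∧ S.Next ℓ A mA ⊆ T}

theorem cpre_mono (S : GS Agt Loc P M) (A : Set Agt) : Monotone (S.CPre A) := by
  intro T T' h ℓ hℓ
  obtain ⟨mA, hv, hn⟩ := hℓ
  exact ⟨mA, hv, hn.trans h⟩

/-- A strategy maps the (strict) past history and current location to a move
for each agent (only the moves of the coalition members are relevant). -/
def Strat (Agt Loc M : Type) : Type := List Loc → Loc → Agt → M

def StratValid (S : GS Agt Loc P M) (A : Set Agt) (F : Strat Agt Loc M) : Prop :=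
  ∀ h ℓ a, a ∈ A → F h ℓ a ∈ S.mov ℓ a

/-- a strategy is memoryless (state-based) if it only depends on the current
location. -/
def Memoryless (F : Strat Agt Loc M) : Prop :=
  ∀ h h' ℓ a, F h ℓ a = F h' ℓ a

/-- the history `ρ 0, …, ρ (i-1)`. -/
def hist (ρ : ℕ → Loc) (i : ℕ) : List Loc := List.ofFn (fun j : Fin i => ρ j)

/-- computations from `ℓ`. -/
def Comp (S : GS Agt Loc P M) (ℓ : Loc) (ρ : ℕ → Loc) : Prop :=
  ρ 0 = ℓ ∧ ∀ i, ρ (i + 1) ∈ S.NextAll (ρ i)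

/-- the outcomes of a strategy `F` of coalition `A` from `ℓ`. -/
def Out (S : GS Agt Loc P M) (A : Set Agt) (ℓ : Loc) (F : Strat Agt Loc M)
    (ρ : ℕ → Loc) : Prop :=
  ρ 0 = ℓ ∧ ∀ i, ρ (i + 1) ∈ S.Next (ρ i) A (F (hist ρ i) (ρ i))

end GS

/-! ### ATL syntax and semantics -/

mutual
  /-- ATL state formulas. -/
  inductive SForm (Agt P : Type) : Type where
    | tru : SForm Agt P
    | atom : P → SForm Agt P
    | snot : SForm Agt P → SForm Agt P
    | sor : SForm Agt P → SForm Agt P → SForm Agt P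
    | coal : Set Agt → PForm Agt P → SForm Agt P
  /-- ATL path formulas. -/
  inductive PForm (Agt P : Type) : Type where
    | pnot : PForm Agt P → PForm Agt P
    | nxt : SForm Agt P → PForm Agt P
    | untl : SForm Agt P → SForm Agt P → PForm Agt P
end

mutual
  /-- satisfaction of an ATL state formula at a location. -/
  def SSat {Agt Loc P M : Type} (S : GS Agt Loc P M) : SForm Agt P → Loc → Prop
    | .tru, _ => True
    | .atom p, ℓ => p ∈ S.lab ℓ
    | .snot φ, ℓ => ¬ SSat S φ ℓ
    | .sor φ ψ, ℓ => SSat S φ ℓ ∨ SSat S ψ ℓ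
    | .coal A φ, ℓ =>
        ∃ F : GS.Strat Agt Loc M, S.StratValid A F ∧
          ∀ ρ : ℕ → Loc, S.Out A ℓ F ρ → PSat S φ ρ
  /-- satisfaction of an ATL path formula along a sequence of locations. -/
  def PSat {Agt Loc P M : Type} (S : GS Agt Loc P M) : PForm Agt P → (ℕ → Loc) → Prop
    | .pnot φ, ρ => ¬ PSat S φ ρ
    | .nxt φ, ρ => SSat S φ (ρ 1)
    | .untl φ ψ, ρ => ∃ i, SSat S ψ (ρ i) ∧ ∀ j < i, SSat S φ (ρ j)
end

/-- the release modality:  `φ R ψ := ¬((¬φ) U (¬ψ))`. -/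
def PForm.rel {Agt P : Type} (φ ψ : SForm Agt P) : PForm Agt P :=
  .pnot (.untl φ.snot ψ.snot)

/-- the weak-until modality:  `φ W ψ := ψ R (φ ∨ ψ)`. -/
def PForm.wuntl {Agt P : Type} (φ ψ : SForm Agt P) : PForm Agt P :=
  PForm.rel ψ (φ.sor ψ)

/-- conjunction of state formulas. -/
def SForm.sand {Agt P : Type} (φ ψ : SForm Agt P) : SForm Agt P :=
  .snot (.sor φ.snot ψ.snot)

/-- the set of locations satisfying a state formula. -/
def SatSet {Agt Loc P M : Type} (S : GS Agt Loc P M) (φ : SForm Agt P) : Set Loc :=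
  {ℓ | SSat S φ ℓ}

/-! ### Concurrent game structures (explicit) and alternating transition systems -/

/-- an (explicit) concurrent game structure: moves are natural numbers, and the
transition table gives the successor of each joint move. -/
structure CGS (Agt Loc P : Type) where
  lab : Loc → Set P
  chc : Loc → Agt → Finset ℕ
  edg : Loc → (Agt → ℕ) → Loc

namespace CGS

variable {Agt Loc P : Type}

def WellFormed (G : CGS Agt Loc P) : Prop := ∀ ℓ a, (G.chc ℓ a).Nonempty

def toGS (G : CGS Agt Loc P) : GS Agt Loc P ℕ where
  lab := G.lab
  mov ℓ a := ↑(G.chc ℓ a)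
  step ℓ m := {G.edg ℓ m}

/-- a CGS is turn-based if in every location at most one agent has more than
one available move. -/
def TurnBased (G : CGS Agt Loc P) : Prop :=
  ∀ ℓ (a b : Agt), 1 < (G.chc ℓ a).card → 1 < (G.chc ℓ b).card → a = b

end CGS

/-- an alternating transition system: a move of an agent is a set of locations;
a joint move leads to the intersection of the chosen sets (a singleton when the
ATS is well-formed). -/
structure ATS (Agt Loc P : Type) where
  lab : Loc → Set P
  chc : Loc → Agt → Set (Set Loc)

namespace ATS

variable {Agt Loc P : Type}

/-- well-formedness: each agent always has some available move, and each joint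
choice of moves intersects in a singleton. -/
def WellFormed (T : ATS Agt Loc P) : Prop :=
  (∀ ℓ a, (T.chc ℓ a).Nonempty) ∧
  ∀ ℓ (Q : Agt → Set Loc), (∀ a, Q a ∈ T.chc ℓ a) → ∃ ℓ', (⋂ a, Q a) = {ℓ'}

def toGS (T : ATS Agt Loc P) : GS Agt Loc P (Set Loc) where
  lab := T.lab
  mov := T.chc
  step _ Q := ⋂ a, Q a

end ATS

/-! ### Statement 7

The set of locations satisfying `⟨A⟩(φ U ψ)` is the least fixpoint of the
monotone map `Z ↦ ⟦ψ⟧ ∪ (⟦φ⟧ ∩ CPre(A, Z))`, both on CGSs and on ATSs. -/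

/-- the fixpoint characterization of `⟨A⟩(φ U ψ)`, for a generic game
structure. -/
def UntilLfpClaim {Agt Loc P M : Type} (S : GS Agt Loc P M) (A : Set Agt)
    (φ ψ : SForm Agt P) : Prop :=
  Monotone (fun Z : Set Loc => SatSet S ψ ∪ (SatSet S φ ∩ S.CPre A Z)) ∧
  IsLeast {Z : Set Loc | SatSet S ψ ∪ (SatSet S φ ∩ S.CPre A Z) = Z}
    (SatSet S (.coal A (.untl φ ψ)))

/-! The coalition wins `φ U ψ` from `ℓ` iff either `ψ` holds at `ℓ`, or `φ` holds there and
the coalition has a move all of whose successors are winning. For `⊇`, play that move and then a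
winning strategy of the location reached; for `⊆`, play the first move of a winning strategy and
then its continuation. Minimality: from a winning location outside a prefixpoint `Z`, the
opponents can keep the play outside `Z` as long as it stays in `⟦φ⟧ \ ⟦ψ⟧`, since those locations
are outside `CPre(A, Z)`; so `⟦ψ⟧ ⊆ Z` is never reached. -/

namespace GS

variable {Agt Loc P M : Type}

theorem hist_succ (ρ : ℕ → Loc) (i : ℕ) :
    hist ρ (i + 1) = ρ 0 :: hist (fun j => ρ (j + 1)) i := by
  simp [hist, List.ofFn_succ]

theorem hist_succ' (ρ : ℕ → Loc) (i : ℕ) : hist ρ (i + 1) = hist ρ i ++ [ρ i] := by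
  simp only [hist, List.ofFn_succ', List.concat_eq_append]
  rfl

theorem headD_hist (ρ : ℕ → Loc) (i : ℕ) : (hist ρ i).headD (ρ i) = ρ 0 := by
  cases i with
  | zero => rfl
  | succ i => rw [hist_succ]; rfl

def runWithHist (sel : List Loc → Loc → Loc) (ℓ : Loc) : ℕ → List Loc × Loc
  | 0 => ([], ℓ)
  | n + 1 =>
    ((runWithHist sel ℓ n).1 ++ [(runWithHist sel ℓ n).2],
      sel (runWithHist sel ℓ n).1 (runWithHist sel ℓ n).2)

theorem exists_run (sel : List Loc → Loc → Loc) (ℓ : Loc) :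
    ∃ ρ : ℕ → Loc, ρ 0 = ℓ ∧ ∀ n, ρ (n + 1) = sel (hist ρ n) (ρ n) := by
  set ρ : ℕ → Loc := fun n => (runWithHist sel ℓ n).2
  have hfst : ∀ n, (runWithHist sel ℓ n).1 = hist ρ n := by
    intro n
    induction n with
    | zero => rfl
    | succ n ih => rw [hist_succ', ← ih]; rfl
  exact ⟨ρ, rfl, fun n => by rw [← hfst]; rfl⟩

section Strategies

variable (S : GS Agt Loc P M) (A : Set Agt)

theorem exists_out {F : Strat Agt Loc M} {R : Loc → Loc → Prop}
    (hF : ∀ h c, ∃ c' ∈ S.Next c A (F h c), R c c') (ℓ : Loc) :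
    ∃ ρ, S.Out A ℓ F ρ ∧ ∀ n, R (ρ n) (ρ (n + 1)) := by
  choose sel hsel using hF
  obtain ⟨ρ, h0, hsucc⟩ := exists_run sel ℓ
  exact ⟨ρ, ⟨h0, fun n => hsucc n ▸ (hsel _ _).1⟩, fun n => hsucc n ▸ (hsel _ _).2⟩

def Strat.after (F : Strat Agt Loc M) (ℓ : Loc) : Strat Agt Loc M := fun h => F (ℓ :: h)

/-- Play the memoryless move `m₀` first, then the strategy `G ℓ₁` of the location `ℓ₁` reached;
`t.headD c` is that `ℓ₁`. -/
def Strat.seq (m₀ : Loc → Agt → M) (G : Loc → Strat Agt Loc M) : Strat Agt Loc M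
  | [], c => m₀ c
  | _ :: t, c => G (t.headD c) t c

variable {S A}

theorem out_cons {F : Strat Agt Loc M} {ℓ ℓ' : Loc} {ρ : ℕ → Loc}
    (hℓ' : ℓ' ∈ S.Next ℓ A (F [] ℓ)) (hρ : S.Out A ℓ' (F.after ℓ) ρ) :
    S.Out A ℓ F (fun | 0 => ℓ | i + 1 => ρ i) := by
  refine ⟨rfl, fun i => ?_⟩
  cases i with
  | zero => show ρ 0 ∈ _; rw [hρ.1]; exact hℓ'
  | succ i => rw [hist_succ]; exact hρ.2 i

theorem out_seq {m₀ : Loc → Agt → M} {G : Loc → Strat Agt Loc M} {ℓ : Loc} {ρ : ℕ → Loc}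
    (hρ : S.Out A ℓ (Strat.seq m₀ G) ρ) :
    ρ 1 ∈ S.Next ℓ A (m₀ ℓ) ∧ S.Out A (ρ 1) (G (ρ 1)) (fun i => ρ (i + 1)) := by
  obtain ⟨h0, hsucc⟩ := hρ
  refine ⟨h0 ▸ hsucc 0, rfl, fun i => ?_⟩
  have := hsucc (i + 1)
  rwa [hist_succ, Strat.seq, headD_hist] at this

def Enforce (S : GS Agt Loc P M) (A : Set Agt) (Φ : (ℕ → Loc) → Prop) : Set Loc :=
  {ℓ | ∃ F, S.StratValid A F ∧ ∀ ρ, S.Out A ℓ F ρ → Φ ρ}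

theorem exists_stratValid (hmove : ∀ ℓ, ∃ mA : Agt → M, ∀ a ∈ A, mA a ∈ S.mov ℓ a) :
    ∃ F, S.StratValid A F :=
  ⟨fun _ c => (hmove c).choose, fun _ c a ha => (hmove c).choose_spec a ha⟩

theorem exists_strat_forall_mem_enforce {Φ : (ℕ → Loc) → Prop}
    (hmove : ∀ ℓ, ∃ mA : Agt → M, ∀ a ∈ A, mA a ∈ S.mov ℓ a) :
    ∃ G : Loc → Strat Agt Loc M, (∀ ℓ, S.StratValid A (G ℓ)) ∧
      ∀ ℓ ∈ S.Enforce A Φ, ∀ ρ, S.Out A ℓ (G ℓ) ρ → Φ ρ := by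
  obtain ⟨F₀, hF₀⟩ := exists_stratValid hmove
  have : ∀ ℓ, ∃ F, S.StratValid A F ∧ (ℓ ∈ S.Enforce A Φ → ∀ ρ, S.Out A ℓ F ρ → Φ ρ) := by
    intro ℓ
    by_cases hℓ : ℓ ∈ S.Enforce A Φ
    · obtain ⟨F, hF, hwin⟩ := hℓ
      exact ⟨F, hF, fun _ => hwin⟩
    · exact ⟨F₀, hF₀, fun h => absurd h hℓ⟩
  choose G hGvalid hGwin using this
  exact ⟨G, hGvalid, hGwin⟩

end Strategies

def Until (X Y : Set Loc) (ρ : ℕ → Loc) : Prop := ∃ i, ρ i ∈ Y ∧ ∀ j < i, ρ j ∈ X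

theorem until_iff_head_or_tail {X Y : Set Loc} {ρ : ℕ → Loc} :
    Until X Y ρ ↔ ρ 0 ∈ Y ∨ ρ 0 ∈ X ∧ Until X Y (fun i => ρ (i + 1)) := by
  constructor
  · rintro ⟨_ | i, hi, hbefore⟩
    · exact Or.inl hi
    · exact Or.inr ⟨hbefore 0 i.succ_pos, i, hi, fun j hj => hbefore (j + 1) (by omega)⟩
  · rintro (h0 | ⟨h0, i, hi, hbefore⟩)
    · exact ⟨0, h0, fun _ hj => absurd hj (Nat.not_lt_zero _)⟩
    · refine ⟨i + 1, hi, fun j hj => ?_⟩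
      cases j with
      | zero => exact h0
      | succ j => exact hbefore j (by omega)

section UntilFixpoint

variable {S : GS Agt Loc P M} {A : Set Agt} {X Y : Set Loc}

theorem subset_enforce_until (hmove : ∀ ℓ, ∃ mA : Agt → M, ∀ a ∈ A, mA a ∈ S.mov ℓ a) :
    Y ⊆ S.Enforce A (Until X Y) := by
  intro ℓ hℓ
  obtain ⟨F, hF⟩ := exists_stratValid hmove
  exact ⟨F, hF, fun ρ hρ => ⟨0, hρ.1 ▸ hℓ, fun _ hj => absurd hj (Nat.not_lt_zero _)⟩⟩

theorem inter_cpre_subset_enforce_until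
    (hmove : ∀ ℓ, ∃ mA : Agt → M, ∀ a ∈ A, mA a ∈ S.mov ℓ a) :
    X ∩ S.CPre A (S.Enforce A (Until X Y)) ⊆ S.Enforce A (Until X Y) := by
  classical
  rintro ℓ ⟨hX, mA, hmA, hsucc⟩
  obtain ⟨F₀, hF₀⟩ := exists_stratValid hmove
  obtain ⟨G, hGvalid, hGwin⟩ := exists_strat_forall_mem_enforce (Φ := Until X Y) hmove
  let m₀ : Loc → Agt → M := fun c => if c = ℓ then mA else F₀ [] c
  have hm₀ : ∀ c, ∀ a ∈ A, m₀ c a ∈ S.mov c a := by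
    intro c a ha
    by_cases hc : c = ℓ
    · subst hc; simpa [m₀] using hmA a ha
    · simpa [m₀, hc] using hF₀ [] c a ha
  refine ⟨Strat.seq m₀ G, ?_, fun ρ hρ => ?_⟩
  · rintro (_ | ⟨_, t⟩) c a ha
    exacts [hm₀ c a ha, hGvalid _ t c a ha]
  · obtain ⟨h1, htail⟩ := out_seq hρ
    have h1 : ρ 1 ∈ S.Next ℓ A mA := by simpa [m₀] using h1
    exact until_iff_head_or_tail.2 (Or.inr ⟨hρ.1 ▸ hX, hGwin _ (hsucc h1) _ htail⟩)

theorem enforce_until_subset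
    (hnext : ∀ ℓ mA, (∀ a ∈ A, mA a ∈ S.mov ℓ a) → (S.Next ℓ A mA).Nonempty) :
    S.Enforce A (Until X Y) ⊆ Y ∪ (X ∩ S.CPre A (S.Enforce A (Until X Y))) := by
  rintro ℓ ⟨F, hF, hwin⟩
  by_cases hY : ℓ ∈ Y
  · exact Or.inl hY
  refine Or.inr ⟨?_, F [] ℓ, hF [] ℓ, fun ℓ' hℓ' => ?_⟩
  · obtain ⟨ρ, hρ, -⟩ := S.exists_out A (R := fun _ _ => True)
      (fun h c => (hnext c (F h c) (hF h c)).imp fun _ h => ⟨h, trivial⟩) ℓ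
    have := until_iff_head_or_tail.1 (hwin ρ hρ)
    rw [hρ.1] at this
    exact (this.resolve_left hY).1
  · refine ⟨F.after ℓ, fun h c => hF (ℓ :: h) c, fun ρ hρ => ?_⟩
    exact ((until_iff_head_or_tail.1 (hwin _ (out_cons hℓ' hρ))).resolve_left hY).2

theorem enforce_until_subset_of_prefixpoint
    (hnext : ∀ ℓ mA, (∀ a ∈ A, mA a ∈ S.mov ℓ a) → (S.Next ℓ A mA).Nonempty)
    {Z : Set Loc} (hZ : Y ∪ (X ∩ S.CPre A Z) ⊆ Z) :
    S.Enforce A (Until X Y) ⊆ Z := by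
  rintro ℓ ⟨F, hF, hwin⟩
  by_contra hℓZ
  have hescape : ∀ h c, ∃ c' ∈ S.Next c A (F h c), c ∉ S.CPre A Z → c' ∉ Z := by
    intro h c
    by_cases hc : c ∈ S.CPre A Z
    · exact (hnext c (F h c) (hF h c)).imp fun _ h => ⟨h, absurd hc⟩
    · have : ¬ S.Next c A (F h c) ⊆ Z := fun hsub => hc ⟨F h c, hF h c, hsub⟩
      obtain ⟨c', hc', hc'Z⟩ := Set.not_subset.1 this
      exact ⟨c', hc', fun _ => hc'Z⟩
  obtain ⟨ρ, hρ, hρZ⟩ := S.exists_out A hescape ℓ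
  obtain ⟨i, hi, hbefore⟩ := hwin ρ hρ
  have hout : ∀ j ≤ i, ρ j ∉ Z := by
    intro j hj
    induction j with
    | zero => exact hρ.1 ▸ hℓZ
    | succ j ih =>
      exact hρZ j fun hcpre => ih (by omega) (hZ (Or.inr ⟨hbefore j (by omega), hcpre⟩))
  exact hout i le_rfl (hZ (Or.inl hi))

theorem isLeast_enforce_until
    (hmove : ∀ ℓ, ∃ mA : Agt → M, ∀ a ∈ A, mA a ∈ S.mov ℓ a)
    (hnext : ∀ ℓ mA, (∀ a ∈ A, mA a ∈ S.mov ℓ a) → (S.Next ℓ A mA).Nonempty) :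
    IsLeast {Z | Y ∪ (X ∩ S.CPre A Z) = Z} (S.Enforce A (Until X Y)) :=
  ⟨(enforce_until_subset hnext).antisymm'
      (Set.union_subset (subset_enforce_until hmove) (inter_cpre_subset_enforce_until hmove)),
    fun _ hZ => enforce_until_subset_of_prefixpoint hnext hZ.le⟩

end UntilFixpoint

theorem satSet_coal_untl (S : GS Agt Loc P M) (A : Set Agt) (φ ψ : SForm Agt P) :
    SatSet S (.coal A (.untl φ ψ)) = S.Enforce A (Until (SatSet S φ) (SatSet S ψ)) := by
  ext ℓ
  simp only [SatSet, SSat, PSat, Enforce, Until, Set.mem_ofPred_eq]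

theorem next_nonempty {S : GS Agt Loc P M} (hmov : ∀ ℓ a, (S.mov ℓ a).Nonempty)
    (hstep : ∀ ℓ m, S.ValidMove ℓ m → (S.step ℓ m).Nonempty)
    {A : Set Agt} {ℓ : Loc} {mA : Agt → M} (hmA : ∀ a ∈ A, mA a ∈ S.mov ℓ a) :
    (S.Next ℓ A mA).Nonempty := by
  classical
  let m : Agt → M := fun a => if a ∈ A then mA a else (hmov ℓ a).some
  have hm : S.ValidMove ℓ m := by
    intro a
    by_cases ha : a ∈ A
    · simpa [m, ha] using hmA a ha
    · simpa [m, ha] using (hmov ℓ a).some_mem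
  obtain ⟨ℓ', hℓ'⟩ := hstep ℓ m hm
  exact ⟨ℓ', m, hm, fun a ha => if_pos ha, hℓ'⟩

theorem untilLfpClaim (S : GS Agt Loc P M) (hmov : ∀ ℓ a, (S.mov ℓ a).Nonempty)
    (hstep : ∀ ℓ m, S.ValidMove ℓ m → (S.step ℓ m).Nonempty)
    (A : Set Agt) (φ ψ : SForm Agt P) : UntilLfpClaim S A φ ψ := by
  refine ⟨fun _ _ h => Set.union_subset_union_right _
    (Set.inter_subset_inter_right _ (S.cpre_mono A h)), ?_⟩
  rw [satSet_coal_untl]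
  exact isLeast_enforce_until (fun ℓ => ⟨fun a => (hmov ℓ a).some, fun a _ => (hmov ℓ a).some_mem⟩)
    (fun _ _ => next_nonempty hmov hstep)

end GS

theorem CGS.untilLfpClaim_toGS {Agt Loc P : Type} (G : CGS Agt Loc P) (hG : G.WellFormed)
    (A : Set Agt) (φ ψ : SForm Agt P) : UntilLfpClaim G.toGS A φ ψ :=
  G.toGS.untilLfpClaim (fun ℓ a => Finset.coe_nonempty.2 (hG ℓ a))
    (fun _ _ _ => Set.singleton_nonempty _) A φ ψ

theorem ATS.untilLfpClaim_toGS {Agt Loc P : Type} (T : ATS Agt Loc P) (hT : T.WellFormed)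
    (A : Set Agt) (φ ψ : SForm Agt P) : UntilLfpClaim T.toGS A φ ψ :=
  T.toGS.untilLfpClaim hT.1
    (fun ℓ m hm => (hT.2 ℓ m hm).imp fun ℓ' (h : (⋂ a, m a) = {ℓ'}) =>
      show ℓ' ∈ ⋂ a, m a from h ▸ rfl) A φ ψ

theorem until_is_least_fixpoint_of_CPre_map
    (Agt P : Type) [Fintype Agt] [Fintype P] :
    (∀ (Loc : Type) [Fintype Loc] (G : CGS Agt Loc P), G.WellFormed →
      ∀ (A : Set Agt) (φ ψ : SForm Agt P), UntilLfpClaim G.toGS A φ ψ) ∧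
    (∀ (Loc : Type) [Fintype Loc] (T : ATS Agt Loc P), T.WellFormed →
      ∀ (A : Set Agt) (φ ψ : SForm Agt P), UntilLfpClaim T.toGS A φ ψ) :=
  ⟨fun _ _ G hG => G.untilLfpClaim_toGS hG, fun _ _ T hT => T.untilLfpClaim_toGS hT⟩
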